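/- Let Φ be an M×N matrix and Ψ an N×N orthonormal matrix such that ΦΨ satisfies the restricted isometry property of order 2K with constant δ_{2K} < √2 - 1. If d = Ψx with x being K-sparse (at most K nonzero entries) and y = Φd, then the minimizer x̂ of ||x'||₁ subject to y = ΦΨx' satisfies x̂ = x, and hence d is exactly recovered as Ψx̂. -/

import Mathlib

open Matrix
/-- x has at most K nonzero entries. -/
def KSparse {n : ℕ} (K : ℕ) (x : Fin n → ℝ) : Prop :=
  (Finset.univ.filter fun i => x i ≠ 0).card ≤ K

noncomputable def l2norm {n : ℕ} (x : Fin n → ℝ) : ℝ :=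
  Real.sqrt (∑ i, (x i) ^ 2)

noncomputable def l1norm {n : ℕ} (x : Fin n → ℝ) : ℝ :=
  ∑ i, |x i|

/-- A satisfies the restricted isometry property of order K with constant δ. -/
def RIP {m n : ℕ} (K : ℕ) (δ : ℝ) (A : Matrix (Fin m) (Fin n) ℝ) : Prop :=
  ∀ z : Fin n → ℝ, KSparse K z →
    (1 - δ) * (l2norm z) ^ 2 ≤ (l2norm (A.mulVec z)) ^ 2 ∧
    (l2norm (A.mulVec z)) ^ 2 ≤ (1 + δ) * (l2norm z) ^ 2

/-!
Put `h = x̂ - x` and let `T₀` be the support of `x`. Then `ΦΨ h = 0`, and minimality of `‖x̂‖₁`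
puts `h` in the cone `‖h_{T₀ᶜ}‖₁ ≤ ‖h_{T₀}‖₁`. Cut `T₀ᶜ` into blocks `T₁, T₂, …` of `K` indices
in decreasing order of `|h|`: each block has `ℓ²` norm at most `K^{-1/2}` times the `ℓ¹` norm of
the previous one, so `∑_{j ≥ 2} ‖h_{T_j}‖₂ ≤ K^{-1/2} ‖h_{T₀ᶜ}‖₁ ≤ ‖h_{T₀}‖₂`. By polarization,
RIP makes `ΦΨ` nearly orthogonal on disjointly supported `K`-sparse vectors, whence, with
`u = h_{T₀ ∪ T₁}`, `(1 - δ)‖u‖₂² ≤ ‖ΦΨ u‖₂² = -⟨ΦΨ u, ∑_{j ≥ 2} ΦΨ h_{T_j}⟩ ≤ √2 δ ‖u‖₂²`.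
For `δ < √2 - 1` this forces `u = 0`, and the cone condition then gives `h = 0`.
-/

open Finset

section Norms

variable {n : ℕ}

lemma l2norm_nonneg (x : Fin n → ℝ) : 0 ≤ l2norm x := Real.sqrt_nonneg _

lemma l2norm_sq (x : Fin n → ℝ) : l2norm x ^ 2 = x ⬝ᵥ x := by
  rw [l2norm, Real.sq_sqrt (by positivity)]
  simp only [dotProduct, sq]

lemma l2norm_eq_zero {x : Fin n → ℝ} : l2norm x = 0 ↔ x = 0 := by
  rw [← dotProduct_self_eq_zero, ← l2norm_sq, sq_eq_zero_iff]

lemma l1norm_eq_zero {x : Fin n → ℝ} : l1norm x = 0 ↔ x = 0 := by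
  simp [l1norm, sum_eq_zero_iff_of_nonneg, funext_iff]

lemma dotProduct_eq_zero_of_disjoint {p q : Fin n → ℝ} (hpq : ∀ i, p i = 0 ∨ q i = 0) :
    p ⬝ᵥ q = 0 :=
  sum_eq_zero fun i _ => by rcases hpq i with h | h <;> simp [h]

lemma l2norm_add_sq {p q : Fin n → ℝ} (hpq : ∀ i, p i = 0 ∨ q i = 0) :
    l2norm (p + q) ^ 2 = l2norm p ^ 2 + l2norm q ^ 2 := by
  simp only [l2norm_sq, add_dotProduct, dotProduct_add, dotProduct_comm q p,
    dotProduct_eq_zero_of_disjoint hpq]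
  ring

lemma l2norm_le_l2norm_add {p q : Fin n → ℝ} (hpq : ∀ i, p i = 0 ∨ q i = 0) :
    l2norm p ≤ l2norm (p + q) :=
  (pow_le_pow_iff_left₀ (l2norm_nonneg _) (l2norm_nonneg _) two_ne_zero).mp
    (by rw [l2norm_add_sq hpq]; nlinarith)

lemma l2norm_add_l2norm_le {p q : Fin n → ℝ} (hpq : ∀ i, p i = 0 ∨ q i = 0) :
    l2norm p + l2norm q ≤ √2 * l2norm (p + q) :=
  (pow_le_pow_iff_left₀ (add_nonneg (l2norm_nonneg _) (l2norm_nonneg _))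
    (mul_nonneg (Real.sqrt_nonneg 2) (l2norm_nonneg _)) two_ne_zero).mp (by
      rw [mul_pow, Real.sq_sqrt zero_le_two, l2norm_add_sq hpq]
      nlinarith [sq_nonneg (l2norm p - l2norm q)])

lemma l2norm_indicator_sq (s : Finset (Fin n)) (h : Fin n → ℝ) :
    l2norm ((s : Set (Fin n)).indicator h) ^ 2 = ∑ i ∈ s, h i ^ 2 := by
  rw [l2norm, Real.sq_sqrt (by positivity), ← Finset.sum_indicator_subset _ s.subset_univ]
  refine sum_congr rfl fun i _ => ?_
  by_cases hi : i ∈ s <;> simp [hi]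

lemma sum_abs_le_sqrt_card_mul_l2norm_indicator (s : Finset (Fin n)) (h : Fin n → ℝ) :
    ∑ i ∈ s, |h i| ≤ √(#s : ℝ) * l2norm ((s : Set (Fin n)).indicator h) := by
  have hcs : (∑ i ∈ s, |h i|) ^ 2 ≤ #s * ∑ i ∈ s, h i ^ 2 := by
    simpa only [sq_abs] using sq_sum_le_card_mul_sum_sq (s := s) (f := fun i => |h i|)
  rw [← Real.sqrt_sq (l2norm_nonneg _), l2norm_indicator_sq, ← Real.sqrt_mul (by positivity)]
  exact Real.le_sqrt_of_sq_le hcs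

lemma sqrt_card_mul_l2norm_indicator_le {s t : Finset (Fin n)} {h : Fin n → ℝ}
    (hts : #t ≤ #s) (hle : ∀ i ∈ s, ∀ j ∈ t, |h j| ≤ |h i|) :
    √(#s : ℝ) * l2norm ((t : Set (Fin n)).indicator h) ≤ ∑ i ∈ s, |h i| := by
  set S := ∑ i ∈ s, |h i|
  have hS : 0 ≤ S := sum_nonneg fun i _ => abs_nonneg (h i)
  have hpoint : ∀ j ∈ t, (#s : ℝ) * |h j| ≤ S := fun j hj => by
    simpa using sum_le_sum fun i hi => hle i hi j hj
  have hsq : (#s : ℝ) * (#s * ∑ j ∈ t, h j ^ 2) ≤ #s * S ^ 2 :=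
    calc (#s : ℝ) * (#s * ∑ j ∈ t, h j ^ 2) = ∑ j ∈ t, ((#s : ℝ) * |h j|) ^ 2 := by
          simp only [mul_sum, mul_pow, sq_abs]; ring_nf
      _ ≤ ∑ _j ∈ t, S ^ 2 :=
          sum_le_sum fun j hj => pow_le_pow_left₀ (by positivity) (hpoint j hj) 2
      _ = #t * S ^ 2 := by rw [sum_const, nsmul_eq_mul]
      _ ≤ #s * S ^ 2 := by gcongr
  rcases (#s).eq_zero_or_pos with hs | hs
  · simp [hs, hS]
  have hsq' : (#s : ℝ) * ∑ j ∈ t, h j ^ 2 ≤ S ^ 2 :=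
    le_of_mul_le_mul_left hsq (by exact_mod_cast hs)
  rw [← Real.sqrt_sq (l2norm_nonneg _), l2norm_indicator_sq, ← Real.sqrt_mul (by positivity)]
  exact Real.sqrt_le_iff.mpr ⟨hS, hsq'⟩

end Norms

section Sparse

variable {n : ℕ}

lemma kSparse_of_support_subset {K : ℕ} {x : Fin n → ℝ} {s : Finset (Fin n)}
    (hx : ∀ i, x i ≠ 0 → i ∈ s) (hs : #s ≤ K) : KSparse K x :=
  (card_le_card fun i hi => hx i (mem_filter.mp hi).2).trans hs

lemma KSparse.add {K L : ℕ} {p q : Fin n → ℝ} (hp : KSparse K p) (hq : KSparse L q) :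
    KSparse (K + L) (p + q) := by
  refine kSparse_of_support_subset (s := univ.filter (p · ≠ 0) ∪ univ.filter (q · ≠ 0))
    (fun i hi => ?_) ((card_union_le _ _).trans (add_le_add hp hq))
  by_contra hc
  simp_all

lemma KSparse.smul {K : ℕ} {p : Fin n → ℝ} (hp : KSparse K p) (c : ℝ) : KSparse K (c • p) :=
  kSparse_of_support_subset (fun i hi => by simp_all) hp

lemma kSparse_indicator {K : ℕ} {s : Finset (Fin n)} (hs : #s ≤ K) (h : Fin n → ℝ) :
    KSparse K ((s : Set (Fin n)).indicator h) :=
  kSparse_of_support_subset (fun i hi => by by_contra hc; simp_all) hs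

end Sparse

lemma Finset.exists_subset_card_eq_min_forall_sdiff_le {α : Type*} [DecidableEq α]
    (v : α → ℝ) (K : ℕ) (S : Finset α) :
    ∃ T ⊆ S, #T = min K #S ∧ ∀ i ∈ T, ∀ j ∈ S \ T, v j ≤ v i := by
  induction K generalizing S with
  | zero => exact ⟨∅, by simp⟩
  | succ K ih =>
    rcases S.eq_empty_or_nonempty with rfl | hS
    · exact ⟨∅, by simp⟩
    obtain ⟨i₀, hi₀, hmax⟩ := S.exists_max_image v hS
    obtain ⟨T, hTS, hcard, hle⟩ := ih (S.erase i₀)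
    have hi₀T : i₀ ∉ T := fun h => (mem_erase.mp (hTS h)).1 rfl
    refine ⟨insert i₀ T, insert_subset hi₀ (hTS.trans (S.erase_subset i₀)), ?_, ?_⟩
    · rw [card_insert_of_notMem hi₀T, hcard, card_erase_of_mem hi₀]
      have := hS.card_pos
      omega
    · intro i hi j hj
      obtain ⟨hjS, hjT⟩ := mem_sdiff.mp hj
      rcases mem_insert.mp hi with rfl | hiT
      · exact hmax j hjS
      · refine hle i hiT j (mem_sdiff.mpr ⟨mem_erase.mpr ⟨?_, hjS⟩, ?_⟩)
        · rintro rfl; exact hjT (mem_insert_self _ _)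
        · exact fun h => hjT (mem_insert_of_mem h)

section RIP

variable {m n : ℕ} {δ : ℝ} {A : Matrix (Fin m) (Fin n) ℝ}

lemma RIP.abs_dotProduct_mulVec_le_of_disjoint {K L : ℕ} (hA : RIP (K + L) δ A)
    {p q : Fin n → ℝ} (hp : KSparse K p) (hq : KSparse L q) (hpq : ∀ i, p i = 0 ∨ q i = 0) :
    |(A *ᵥ p) ⬝ᵥ (A *ᵥ q)| ≤ δ / 2 * (p ⬝ᵥ p + q ⬝ᵥ q) := by
  have hplus := hA (p + q) (hp.add hq)
  have hminus := hA (p + (-1 : ℝ) • q) (hp.add (hq.smul _))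
  simp only [l2norm_sq, mulVec_add, mulVec_smul, add_dotProduct, dotProduct_add,
    smul_dotProduct, dotProduct_smul, smul_eq_mul, dotProduct_comm q p,
    dotProduct_comm (A *ᵥ q) (A *ᵥ p), dotProduct_eq_zero_of_disjoint hpq] at hplus hminus
  rw [abs_le]
  constructor <;> linarith [hplus.1, hplus.2, hminus.1, hminus.2]

lemma RIP.abs_dotProduct_mulVec_le {K L : ℕ} (hA : RIP (K + L) δ A)
    {p q : Fin n → ℝ} (hp : KSparse K p) (hq : KSparse L q) (hpq : ∀ i, p i = 0 ∨ q i = 0) :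
    |(A *ᵥ p) ⬝ᵥ (A *ᵥ q)| ≤ δ * l2norm p * l2norm q := by
  -- rescaled to equal norms, `p` and `q` make the AM-GM bound of the previous lemma sharp
  have key := hA.abs_dotProduct_mulVec_le_of_disjoint (hp.smul (l2norm q)) (hq.smul (l2norm p))
    fun i => (hpq i).imp (fun h => by simp [h]) (fun h => by simp [h])
  simp only [mulVec_smul, smul_dotProduct, dotProduct_smul, smul_eq_mul, ← l2norm_sq, abs_mul,
    abs_of_nonneg (l2norm_nonneg p), abs_of_nonneg (l2norm_nonneg q)] at key
  rcases (mul_nonneg (l2norm_nonneg p) (l2norm_nonneg q)).eq_or_lt with hpq0 | hpq0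
  · rcases mul_eq_zero.mp hpq0.symm with hp0 | hq0
    · rw [hp0]; simp [l2norm_eq_zero.mp hp0]
    · rw [hq0]; simp [l2norm_eq_zero.mp hq0]
  · refine le_of_mul_le_mul_left ?_ hpq0
    linarith

/-- The tail `R` is peeled off in blocks of `K` coordinates of decreasing `|h|`, each bounded in
`ℓ²` by the `ℓ¹` norm of the block before it; `T` is the block preceding `R`. -/
lemma RIP.sqrt_mul_abs_dotProduct_mulVec_indicator_le {K : ℕ} (hA : RIP (2 * K) δ A)
    (hδ₀ : 0 ≤ δ) {p : Fin n → ℝ} (hp : KSparse K p) (h : Fin n → ℝ) (R T : Finset (Fin n))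
    (hpR : ∀ i ∈ R, p i = 0) (hT : R.Nonempty → #T = K)
    (hTR : ∀ i ∈ T, ∀ j ∈ R, |h j| ≤ |h i|) :
    √(K : ℝ) * |(A *ᵥ p) ⬝ᵥ (A *ᵥ (R : Set (Fin n)).indicator h)|
      ≤ δ * l2norm p * (∑ i ∈ T, |h i| + ∑ i ∈ R, |h i|) := by
  rw [two_mul] at hA
  induction R using Finset.strongInduction generalizing T with
  | H R ih =>
  have hrhs : 0 ≤ δ * l2norm p * (∑ i ∈ T, |h i| + ∑ i ∈ R, |h i|) :=
    mul_nonneg (mul_nonneg hδ₀ (l2norm_nonneg p))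
      (add_nonneg (sum_nonneg fun i _ => abs_nonneg _) (sum_nonneg fun i _ => abs_nonneg _))
  rcases R.eq_empty_or_nonempty with rfl | hR
  · rw [coe_empty, Set.indicator_empty', mulVec_zero, dotProduct_zero, abs_zero, mul_zero]
    exact hrhs
  rcases K.eq_zero_or_pos with rfl | hK
  · simpa using hrhs
  obtain ⟨R₁, hR₁R, hR₁card, hR₁le⟩ := R.exists_subset_card_eq_min_forall_sdiff_le (|h ·|) K
  have hR₁K : #R₁ ≤ K := hR₁card ▸ min_le_left _ _
  have hR₁ne : R₁.Nonempty := card_pos.mp (hR₁card ▸ lt_min hK hR.card_pos)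
  have hsplit : (R : Set (Fin n)).indicator h
      = (R₁ : Set (Fin n)).indicator h + ((R \ R₁ : Finset (Fin n)) : Set (Fin n)).indicator h := by
    have := Set.indicator_union_of_disjoint
      (disjoint_coe.mpr (disjoint_sdiff (s := R₁) (t := R))) h
    rwa [← coe_union, union_sdiff_of_subset hR₁R] at this
  have hhead : √(K : ℝ) * |(A *ᵥ p) ⬝ᵥ (A *ᵥ (R₁ : Set (Fin n)).indicator h)|
      ≤ δ * l2norm p * ∑ i ∈ T, |h i| := by
    have hcross := hA.abs_dotProduct_mulVec_le hp (kSparse_indicator hR₁K h) fun i => by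
      by_cases hi : i ∈ R₁
      · exact .inl (hpR i (hR₁R hi))
      · exact .inr (by simp [hi])
    have hblock := sqrt_card_mul_l2norm_indicator_le (h := h) (hT hR ▸ hR₁K)
      fun i hi j hj => hTR i hi j (hR₁R hj)
    rw [hT hR] at hblock
    calc _ ≤ √(K : ℝ) * (δ * l2norm p * l2norm ((R₁ : Set (Fin n)).indicator h)) := by gcongr
      _ = δ * l2norm p * (√(K : ℝ) * l2norm ((R₁ : Set (Fin n)).indicator h)) := by ring
      _ ≤ δ * l2norm p * ∑ i ∈ T, |h i| := by gcongr; exact mul_nonneg hδ₀ (l2norm_nonneg p)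
  have htail := ih (R \ R₁) (sdiff_ssubset hR₁R hR₁ne) R₁
    (fun i hi => hpR i (mem_sdiff.mp hi).1)
    (fun hne => by have := hne.card_pos; rw [card_sdiff_of_subset hR₁R] at this; omega) hR₁le
  rw [hsplit, mulVec_add, dotProduct_add, ← sum_sdiff hR₁R]
  calc _ ≤ _ := by rw [← mul_add]; gcongr; exact abs_add_le _ _
    _ ≤ _ := add_le_add hhead htail
    _ = _ := by ring

lemma RIP.sqrt_mul_sq_l2norm_mulVec_indicator_le {K : ℕ} (hA : RIP (2 * K) δ A) (hδ₀ : 0 ≤ δ)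
    {h : Fin n → ℝ} (hker : A *ᵥ h = 0) {T₀ T₁ : Finset (Fin n)} (hT₀ : #T₀ ≤ K)
    (hT₁ : T₁ ⊆ T₀ᶜ) (hT₁card : #T₁ = min K #T₀ᶜ)
    (hT₁le : ∀ i ∈ T₁, ∀ j ∈ T₀ᶜ \ T₁, |h j| ≤ |h i|) :
    √(K : ℝ) * l2norm (A *ᵥ ((T₀ : Set (Fin n)).indicator h + (T₁ : Set (Fin n)).indicator h)) ^ 2
      ≤ δ * (l2norm ((T₀ : Set (Fin n)).indicator h) + l2norm ((T₁ : Set (Fin n)).indicator h))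
        * ∑ i ∈ T₀ᶜ, |h i| := by
  set a := (T₀ : Set (Fin n)).indicator h
  set b := (T₁ : Set (Fin n)).indicator h
  set r := ((T₀ᶜ \ T₁ : Finset (Fin n)) : Set (Fin n)).indicator h
  have hAu : A *ᵥ (a + b) = -(A *ᵥ r) := by
    rw [eq_neg_iff_add_eq_zero, ← mulVec_add, ← hker]
    congr 1
    ext i
    by_cases h₀ : i ∈ T₀ <;> by_cases h₁ : i ∈ T₁ <;> simp_all [a, b, r, Finset.subset_iff]
  have hT : (T₀ᶜ \ T₁).Nonempty → #T₁ = K := fun hne => by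
    have := hne.card_pos
    rw [card_sdiff_of_subset hT₁] at this
    omega
  have hra := hA.sqrt_mul_abs_dotProduct_mulVec_indicator_le hδ₀ (kSparse_indicator hT₀ h) h
    (T₀ᶜ \ T₁) T₁ (fun i hi => Set.indicator_of_notMem (by simp_all) h) hT hT₁le
  have hrb := hA.sqrt_mul_abs_dotProduct_mulVec_indicator_le hδ₀
    (kSparse_indicator (hT₁card ▸ min_le_left _ _) h) h
    (T₀ᶜ \ T₁) T₁ (fun i hi => Set.indicator_of_notMem (by simp_all) h) hT hT₁le
  rw [add_comm, sum_sdiff hT₁] at hra hrb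
  calc √(K : ℝ) * l2norm (A *ᵥ (a + b)) ^ 2
      = √(K : ℝ) * -((A *ᵥ a) ⬝ᵥ (A *ᵥ r) + (A *ᵥ b) ⬝ᵥ (A *ᵥ r)) := by
        rw [l2norm_sq]; nth_rw 2 [hAu]; rw [dotProduct_neg, mulVec_add, add_dotProduct]
    _ ≤ √(K : ℝ) * |(A *ᵥ a) ⬝ᵥ (A *ᵥ r)| + √(K : ℝ) * |(A *ᵥ b) ⬝ᵥ (A *ᵥ r)| := by
        rw [← mul_add]
        gcongr
        linarith [neg_abs_le ((A *ᵥ a) ⬝ᵥ (A *ᵥ r)), neg_abs_le ((A *ᵥ b) ⬝ᵥ (A *ᵥ r))]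
    _ ≤ _ := by linarith

lemma RIP.eq_zero_of_mulVec_eq_zero {K : ℕ} (hA : RIP (2 * K) δ A) (hδ₀ : 0 ≤ δ)
    (hδ : δ < √2 - 1) {h : Fin n → ℝ} (hker : A *ᵥ h = 0) {T₀ : Finset (Fin n)}
    (hT₀ : #T₀ ≤ K) (hcone : ∑ i ∈ T₀ᶜ, |h i| ≤ ∑ i ∈ T₀, |h i|) : h = 0 := by
  obtain ⟨T₁, hT₁, hT₁card, hT₁le⟩ := T₀ᶜ.exists_subset_card_eq_min_forall_sdiff_le (|h ·|) K
  have henergy := hA.sqrt_mul_sq_l2norm_mulVec_indicator_le hδ₀ hker hT₀ hT₁ hT₁card hT₁le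
  set a := (T₀ : Set (Fin n)).indicator h
  set b := (T₁ : Set (Fin n)).indicator h
  have hab : ∀ i, a i = 0 ∨ b i = 0 := fun i => by
    by_cases h₀ : i ∈ T₀
    · exact .inr (Set.indicator_of_notMem (fun h₁ => mem_compl.mp (hT₁ h₁) h₀) h)
    · exact .inl (Set.indicator_of_notMem h₀ h)
  have hsparse : KSparse (2 * K) (a + b) :=
    two_mul K ▸ (kSparse_indicator hT₀ h).add (kSparse_indicator (hT₁card ▸ min_le_left _ _) h)
  set u := l2norm (a + b)
  have hhead : ∑ i ∈ T₀, |h i| ≤ √(K : ℝ) * u :=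
    (sum_abs_le_sqrt_card_mul_l2norm_indicator T₀ h).trans
      (mul_le_mul (Real.sqrt_le_sqrt (by exact_mod_cast hT₀)) (l2norm_le_l2norm_add hab)
        (l2norm_nonneg _) (Real.sqrt_nonneg _))
  have hchain : √(K : ℝ) * u ^ 2 * (1 - δ) ≤ √(K : ℝ) * u ^ 2 * (√2 * δ) :=
    calc √(K : ℝ) * u ^ 2 * (1 - δ) = √(K : ℝ) * ((1 - δ) * u ^ 2) := by ring
      _ ≤ √(K : ℝ) * l2norm (A *ᵥ (a + b)) ^ 2 := by gcongr; exact (hA _ hsparse).1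
      _ ≤ δ * (l2norm a + l2norm b) * ∑ i ∈ T₀ᶜ, |h i| := henergy
      _ ≤ δ * (√2 * u) * (√(K : ℝ) * u) :=
          mul_le_mul (mul_le_mul_of_nonneg_left (l2norm_add_l2norm_le hab) hδ₀)
            (hcone.trans hhead) (sum_nonneg fun i _ => abs_nonneg (h i))
            (mul_nonneg hδ₀ (mul_nonneg (Real.sqrt_nonneg 2) (l2norm_nonneg _)))
      _ = √(K : ℝ) * u ^ 2 * (√2 * δ) := by ring
  have hKu : √(K : ℝ) * u = 0 := by
    have hc : √2 * δ < 1 - δ := by nlinarith [Real.sq_sqrt (zero_le_two (α := ℝ))]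
    have hKu2 : √(K : ℝ) * u ^ 2 ≤ 0 := by nlinarith
    have hsq : (√(K : ℝ) * u) ^ 2 ≤ 0 := by nlinarith [Real.sqrt_nonneg (K : ℝ)]
    exact pow_eq_zero_iff two_ne_zero |>.mp (le_antisymm hsq (sq_nonneg _))
  rw [← l1norm_eq_zero]
  refine le_antisymm ?_ (sum_nonneg fun i _ => abs_nonneg (h i))
  rw [l1norm, ← sum_add_sum_compl T₀]
  linarith

end RIP

lemma sum_compl_abs_le_of_l1norm_add_le {n : ℕ} {x h : Fin n → ℝ} {T : Finset (Fin n)}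
    (hx : ∀ i ∉ T, x i = 0) (hle : l1norm (x + h) ≤ l1norm x) :
    ∑ i ∈ Tᶜ, |h i| ≤ ∑ i ∈ T, |h i| := by
  have hxh : l1norm (x + h) = ∑ i ∈ T, |x i + h i| + ∑ i ∈ Tᶜ, |h i| := by
    rw [l1norm, ← sum_add_sum_compl T]
    congr 1
    exact sum_congr rfl fun i hi => by simp [hx i (mem_compl.mp hi)]
  have hx' : l1norm x = ∑ i ∈ T, |x i| := by
    rw [l1norm, ← sum_add_sum_compl T, add_eq_left]
    exact sum_eq_zero fun i hi => by simp [hx i (mem_compl.mp hi)]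
  have htri : ∑ i ∈ T, |x i| ≤ ∑ i ∈ T, |x i + h i| + ∑ i ∈ T, |h i| := by
    rw [← sum_add_distrib]
    exact sum_le_sum fun i _ => by simpa using abs_add_le (x i + h i) (-h i)
  linarith

theorem stmt_7_general {M N K : ℕ} (Φ : Matrix (Fin M) (Fin N) ℝ) (Ψ : Matrix (Fin N) (Fin N) ℝ)
    (δ : ℝ) (hδpos : 0 ≤ δ) (hδ : δ < Real.sqrt 2 - 1)
    (hRIP : RIP (2 * K) δ (Φ * Ψ))
    (x d y xh : _) (hx : KSparse K x) (hd : d = Ψ.mulVec x) (hy : y = Φ.mulVec d)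
    (hfeas : y = (Φ * Ψ).mulVec xh)
    (hmin : ∀ x' : Fin N → ℝ, y = (Φ * Ψ).mulVec x' → l1norm xh ≤ l1norm x') :
    xh = x ∧ Ψ.mulVec xh = d := by
  have hfeas_x : y = (Φ * Ψ) *ᵥ x := by rw [hy, hd, mulVec_mulVec]
  have hker : (Φ * Ψ) *ᵥ (xh - x) = 0 := by rw [mulVec_sub, ← hfeas, ← hfeas_x, sub_self]
  have hcone := sum_compl_abs_le_of_l1norm_add_le (T := univ.filter (x · ≠ 0)) (h := xh - x)
    (fun i hi => by simpa using hi) (by simpa using hmin x hfeas_x)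
  have hxh : xh = x := sub_eq_zero.mp (hRIP.eq_zero_of_mulVec_eq_zero hδpos hδ hker hx hcone)
  exact ⟨hxh, hxh ▸ hd.symm⟩

/-- Exact recovery of a K-sparse representation by ℓ₁ minimization under RIP of
order 2K with δ_{2K} < √2 - 1. -/
theorem stmt_7 {M N K : ℕ} (Φ : Matrix (Fin M) (Fin N) ℝ) (Ψ : Matrix (Fin N) (Fin N) ℝ)
    (hΨ : Ψᵀ * Ψ = 1) (δ : ℝ) (hδpos : 0 ≤ δ) (hδ : δ < Real.sqrt 2 - 1)
    (hRIP : RIP (2 * K) δ (Φ * Ψ))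
    (x d y xh : _) (hx : KSparse K x) (hd : d = Ψ.mulVec x) (hy : y = Φ.mulVec d)
    (hfeas : y = (Φ * Ψ).mulVec xh)
    (hmin : ∀ x' : Fin N → ℝ, y = (Φ * Ψ).mulVec x' → l1norm xh ≤ l1norm x') :
    xh = x ∧ Ψ.mulVec xh = d :=
  stmt_7_general Φ Ψ δ hδpos hδ hRIP x d y xh hx hd hy hfeas hmin
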